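/- Let N be a positive integer, let a ∈ ℤ, and let P ⊂ ℝ² be a smooth full-dimensional lattice polytope with exactly 4 vertices whose set of primitive outer facet normals is {(1,0), (0,1), (0,−1), (−1,−a)}. If |P ∩ ℤ²| ≤ N, then −N ≤ a ≤ N. -/

import Mathlib

/-! The normals `(0, ±1)` make the top and bottom edges horizontal, and since `P` has only four
vertices, every vertex lies on one of these two lines. Hence the edges with normals `(1, 0)` and
`(-1, -a)` both join the top line to the bottom line. If `h ≥ 1` is the height of `P` and `T`, `L`
are the lattice lengths of the top and bottom edges, comparing the endpoints of these two edges
gives `a * h = T - L`, while the two horizontal edges contain `T + 1` and `L + 1` lattice points,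
so that `|a| ≤ max T L ≤ N - 1`. -/

open Set

/-- Interpret an integer vector as a real vector. -/
def ofInt {d : ℕ} (z : Fin d → ℤ) : Fin d → ℝ := fun i => (z i : ℝ)

/-- A lattice polytope: convex hull of a finite set of integer points. -/
def IsLatticePolytope {d : ℕ} (P : Set (Fin d → ℝ)) : Prop :=
  ∃ V : Finset (Fin d → ℤ), P = convexHull ℝ (ofInt '' (V : Set (Fin d → ℤ)))

/-- Two vertices are adjacent if the segment between them is an edge
(an extreme subset) of the polytope. -/
def Adjacent {d : ℕ} (P : Set (Fin d → ℝ)) (v w : Fin d → ℝ) : Prop :=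
  v ∈ Set.extremePoints ℝ P ∧ w ∈ Set.extremePoints ℝ P ∧ v ≠ w ∧
    IsExtreme ℝ P (segment ℝ v w)

/-- A polytope is simple if every vertex has exactly `d` neighbours. -/
def IsSimplePolytope {d : ℕ} (P : Set (Fin d → ℝ)) : Prop :=
  ∀ v ∈ Set.extremePoints ℝ P, {w | Adjacent P v w}.ncard = d

/-- A smooth (full-dimensional) lattice polytope: a simple full-dimensional lattice
polytope such that at each vertex the primitive edge directions form a ℤ-basis of ℤ^d. -/
def IsSmoothPolytope {d : ℕ} (P : Set (Fin d → ℝ)) : Prop :=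
  IsLatticePolytope P ∧ affineSpan ℝ P = ⊤ ∧ IsSimplePolytope P ∧
    ∀ v ∈ Set.extremePoints ℝ P, ∃ b : Module.Basis (Fin d) ℤ (Fin d → ℤ),
      (∀ w, Adjacent P v w → ∃ i : Fin d, ∃ c : ℤ, 0 < c ∧ w = v + c • ofInt (b i)) ∧
      (∀ i : Fin d, ∃ w, Adjacent P v w ∧ ∃ c : ℤ, 0 < c ∧ w = v + c • ofInt (b i))

/-- The lattice points of `P`. -/
def latticePts {d : ℕ} (P : Set (Fin d → ℝ)) : Set (Fin d → ℝ) :=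
  {x ∈ P | ∃ z : Fin d → ℤ, x = ofInt z}

/-- Unimodular equivalence: `Q` is the image of `P` under `x ↦ Mx + t`
with `M ∈ GL_d(ℤ)` and `t ∈ ℤ^d`. -/
def UnimodEquiv {d : ℕ} (P Q : Set (Fin d → ℝ)) : Prop :=
  ∃ M : Matrix (Fin d) (Fin d) ℤ, IsUnit M.det ∧ ∃ t : Fin d → ℤ,
    Q = (fun x => (M.map ((↑) : ℤ → ℝ)).mulVec x + ofInt t) '' P

/-- The dot product of an integer vector with a real vector. -/
def dotZR {d : ℕ} (n : Fin d → ℤ) (x : Fin d → ℝ) : ℝ := ∑ i, (n i : ℝ) * x i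

/-- `n` is a primitive outer facet normal of `P` if `n` is primitive and the set of
points of `P` maximizing `⟨n, ·⟩` is an edge of `P`. -/
def IsOuterFacetNormal {d : ℕ} (P : Set (Fin d → ℝ)) (n : Fin d → ℤ) : Prop :=
  Finset.univ.gcd n = 1 ∧ ∃ c : ℝ, (∀ x ∈ P, dotZR n x ≤ c) ∧
    ∃ v w, Adjacent P v w ∧ {x ∈ P | dotZR n x = c} = segment ℝ v w

@[simp] lemma ofInt_apply {d : ℕ} (z : Fin d → ℤ) (i : Fin d) : ofInt z i = z i := rfl

lemma ofInt_add {d : ℕ} (z w : Fin d → ℤ) : ofInt (z + w) = ofInt z + ofInt w := by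
  ext i; simp

lemma ofInt_smul {d : ℕ} (k : ℤ) (z : Fin d → ℤ) : ofInt (k • z) = (k : ℝ) • ofInt z := by
  ext i; simp

lemma isometry_ofInt {d : ℕ} : Isometry (ofInt (d := d)) :=
  Isometry.piMap _ fun _ => Real.isometry_intCast

lemma ofInt_injective {d : ℕ} : Function.Injective (ofInt (d := d)) :=
  isometry_ofInt.injective

namespace IsLatticePolytope

variable {d : ℕ} {P : Set (Fin d → ℝ)}

lemma convex (hP : IsLatticePolytope P) : Convex ℝ P := by
  obtain ⟨V, rfl⟩ := hP
  exact convex_convexHull ℝ _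

lemma finite_latticePts (hP : IsLatticePolytope P) : (latticePts P).Finite := by
  obtain ⟨V, rfl⟩ := hP
  have hbdd : Bornology.IsBounded (ofInt ⁻¹' convexHull ℝ (ofInt '' (V : Set (Fin d → ℤ)))) :=
    isometry_ofInt.antilipschitz.isBounded_preimage
      ((V.finite_toSet.image _).isCompact_convexHull ℝ).isBounded
  have hfin :=
    (Metric.isCompact_of_isClosed_isBounded (isClosed_discrete _) hbdd).finite_of_discrete
  refine (hfin.image ofInt).subset ?_
  rintro x ⟨hx, z, rfl⟩
  exact ⟨z, hx, rfl⟩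

lemma extremePoints_subset_latticePts (hP : IsLatticePolytope P) :
    Set.extremePoints ℝ P ⊆ latticePts P := by
  obtain ⟨V, rfl⟩ := hP
  intro x hx
  obtain ⟨z, -, rfl⟩ := extremePoints_convexHull_subset hx
  exact ⟨hx.1, z, rfl⟩

end IsLatticePolytope

lemma Convex.ofInt_add_smul_mem {d : ℕ} {P : Set (Fin d → ℝ)} (hP : Convex ℝ P)
    {z v : Fin d → ℤ} {m k : ℕ} (h₀ : ofInt z ∈ P) (hm : ofInt (z + (m : ℤ) • v) ∈ P)
    (hk : k ≤ m) : ofInt (z + (k : ℤ) • v) ∈ P := by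
  rcases Nat.eq_zero_or_pos m with rfl | hm0
  · simpa [Nat.le_zero.mp hk] using h₀
  have key := hP.add_smul_mem h₀ (by rwa [← ofInt_add]) (t := (k : ℝ) / m)
    ⟨by positivity, div_le_one_of_le₀ (by exact_mod_cast hk) (by positivity)⟩
  convert key using 1
  rw [ofInt_add, ofInt_smul, ofInt_smul, smul_smul]
  congr 2
  field_simp
  push_cast; ring

lemma IsLatticePolytope.add_one_le_ncard_latticePts {d : ℕ} {P : Set (Fin d → ℝ)}
    (hP : IsLatticePolytope P) {z v : Fin d → ℤ} (hv : v ≠ 0) {m : ℕ} (h₀ : ofInt z ∈ P)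
    (hm : ofInt (z + (m : ℤ) • v) ∈ P) : m + 1 ≤ (latticePts P).ncard := by
  classical
  set f : ℕ → Fin d → ℝ := fun k => ofInt (z + (k : ℤ) • v)
  have hf : Function.Injective f := fun k l hkl =>
    Nat.cast_injective (smul_left_injective ℤ hv (add_left_cancel (ofInt_injective hkl)))
  have hsub : ((Finset.range (m + 1)).image f : Set (Fin d → ℝ)) ⊆ latticePts P := by
    intro x hx
    simp only [Finset.coe_image, Finset.coe_range, Set.mem_image, Set.mem_Iio] at hx
    obtain ⟨k, hk, rfl⟩ := hx
    exact ⟨hP.convex.ofInt_add_smul_mem h₀ hm (Nat.lt_succ_iff.mp hk), _, rfl⟩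
  calc m + 1 = ((Finset.range (m + 1)).image f).card := by
        rw [Finset.card_image_of_injective _ hf, Finset.card_range]
    _ ≤ (latticePts P).ncard := by
        rw [← Set.ncard_coe_finset]
        exact Set.ncard_le_ncard hsub hP.finite_latticePts

lemma IsLatticePolytope.sub_add_one_le_ncard_latticePts {P : Set (Fin 2 → ℝ)}
    (hP : IsLatticePolytope P) {x y : Fin 2 → ℝ} (hx : x ∈ latticePts P) (hy : y ∈ latticePts P)
    (h₁ : x 1 = y 1) (h₀ : x 0 ≤ y 0) : y 0 - x 0 + 1 ≤ (latticePts P).ncard := by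
  obtain ⟨hxP, z, rfl⟩ := hx
  obtain ⟨hyP, w, rfl⟩ := hy
  simp only [ofInt_apply, Int.cast_inj, Int.cast_le] at h₁ h₀ ⊢
  have hw : w = z + ((w 0 - z 0).toNat : ℤ) • ![1, 0] := by
    ext i
    fin_cases i
    · simp; omega
    · simp [h₁]
  have := hP.add_one_le_ncard_latticePts (by simp) hxP (hw ▸ hyP)
  exact_mod_cast (by omega : w 0 - z 0 + 1 ≤ ((latticePts P).ncard : ℤ))

lemma add_one_le_of_lt_of_mem_latticePts {d : ℕ} {P : Set (Fin d → ℝ)} {x y : Fin d → ℝ}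
    (hx : x ∈ latticePts P) (hy : y ∈ latticePts P) {i : Fin d} (h : x i < y i) :
    x i + 1 ≤ y i := by
  obtain ⟨-, z, rfl⟩ := hx
  obtain ⟨-, w, rfl⟩ := hy
  simp only [ofInt_apply] at h ⊢
  exact_mod_cast Int.add_one_le_of_lt (by exact_mod_cast h)

lemma dotZR_fin_two (n : Fin 2 → ℤ) (x : Fin 2 → ℝ) : dotZR n x = n 0 * x 0 + n 1 * x 1 := by
  simp [dotZR, Fin.sum_univ_two]

lemma exists_apply_ne_of_affineSpan_eq_top {d : ℕ} {P : Set (Fin d → ℝ)}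
    (h : affineSpan ℝ P = ⊤) (i : Fin d) (c : ℝ) : ∃ x ∈ P, x i ≠ c := by
  by_contra! hc
  have hle : vectorSpan ℝ P ≤ LinearMap.ker (LinearMap.proj i) := by
    rw [vectorSpan_def, Submodule.span_le]
    rintro _ ⟨x, hx, y, hy, rfl⟩
    simp [hc x hx, hc y hy]
  rw [← direction_affineSpan, h, AffineSubspace.direction_top] at hle
  simpa using hle (Submodule.mem_top (x := Pi.single i 1))

lemma IsOuterFacetNormal.exists_edge {d : ℕ} {P : Set (Fin d → ℝ)} {n : Fin d → ℤ}
    (h : IsOuterFacetNormal P n) : ∃ c, (∀ x ∈ P, dotZR n x ≤ c) ∧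
      ∃ v ∈ Set.extremePoints ℝ P, ∃ w ∈ Set.extremePoints ℝ P,
        v ≠ w ∧ dotZR n v = c ∧ dotZR n w = c := by
  obtain ⟨-, c, hc, v, w, ⟨hv, hw, hvw, -⟩, hseg⟩ := h
  have hv' : v ∈ {x ∈ P | dotZR n x = c} := hseg ▸ left_mem_segment ℝ v w
  have hw' : w ∈ {x ∈ P | dotZR n x = c} := hseg ▸ right_mem_segment ℝ v w
  exact ⟨c, hc, v, hv, w, hw, hvw, hv'.2, hw'.2⟩

section Quadrilateral

variable {P : Set (Fin 2 → ℝ)}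

lemma exists_apply_one_eq_or_eq_of_mem_extremePoints (hspan : affineSpan ℝ P = ⊤)
    (hv : (Set.extremePoints ℝ P).ncard = 4) (htop : IsOuterFacetNormal P ![0, 1])
    (hbot : IsOuterFacetNormal P ![0, -1]) :
    ∃ b t : ℝ, b < t ∧ ∀ v ∈ Set.extremePoints ℝ P, v 1 = t ∨ v 1 = b := by
  obtain ⟨t, ht, p, hp, q, hq, hpq, hpt, hqt⟩ := htop.exists_edge
  obtain ⟨b, hb, r, hr, s, hs, hrs, hrb, hsb⟩ := hbot.exists_edge
  simp only [dotZR_fin_two, Fin.isValue, Matrix.cons_val_zero, Matrix.cons_val_one,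
    Int.cast_zero, Int.cast_one, Int.cast_neg, zero_mul, one_mul, neg_mul,
    zero_add] at ht hb hpt hqt hrb hsb
  have hbt : -b < t := by
    obtain ⟨x, hx, hxt⟩ := exists_apply_ne_of_affineSpan_eq_top hspan 1 t
    linarith [hb x hx, lt_of_le_of_ne (ht x hx) hxt]
  have hne : ∀ u ∈ ({p, q} : Set (Fin 2 → ℝ)), ∀ u' ∈ ({r, s} : Set (Fin 2 → ℝ)), u ≠ u' := by
    rintro u hu u' hu' rfl
    rcases hu with rfl | rfl <;> rcases hu' with rfl | rfl <;> linarith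
  have h4 : ({p, q, r, s} : Set (Fin 2 → ℝ)).ncard = 4 := by
    rw [Set.ncard_insert_of_notMem, Set.ncard_insert_of_notMem, Set.ncard_pair hrs]
    · simp [hne q (by simp) r (by simp), hne q (by simp) s (by simp)]
    · simp [hpq, hne p (by simp) r (by simp), hne p (by simp) s (by simp)]
  have hE : {p, q, r, s} = Set.extremePoints ℝ P :=
    Set.eq_of_subset_of_ncard_le (by simp [Set.insert_subset_iff, hp, hq, hr, hs])
      (by rw [hv, h4]) (Set.finite_of_ncard_ne_zero (by omega))
  refine ⟨-b, t, hbt, fun v hv' => ?_⟩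
  rw [← hE] at hv'
  rcases hv' with rfl | rfl | rfl | rfl
  · exact .inl hpt
  · exact .inl hqt
  · exact .inr (by linarith)
  · exact .inr (by linarith)

lemma IsOuterFacetNormal.exists_top_bottom {b t : ℝ}
    (hvert : ∀ v ∈ Set.extremePoints ℝ P, v 1 = t ∨ v 1 = b) {n : Fin 2 → ℤ}
    (hn : IsOuterFacetNormal P n) (hn₀ : n 0 ≠ 0) : ∃ c, (∀ x ∈ P, dotZR n x ≤ c) ∧
      ∃ u ∈ Set.extremePoints ℝ P, ∃ u' ∈ Set.extremePoints ℝ P,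
        u 1 = t ∧ u' 1 = b ∧ dotZR n u = c ∧ dotZR n u' = c := by
  obtain ⟨c, hc, v, hv, w, hw, hvw, hvc, hwc⟩ := hn.exists_edge
  have hvw₁ : v 1 ≠ w 1 := by
    intro h₁
    have h₀ : (n 0 : ℝ) * v 0 = n 0 * w 0 := by
      rw [dotZR_fin_two] at hvc hwc
      linear_combination hvc - hwc - (n 1 : ℝ) * h₁
    exact hvw (by ext i; fin_cases i
                  exacts [mul_left_cancel₀ (Int.cast_ne_zero.mpr hn₀) h₀, h₁])
  rcases hvert v hv with hv₁ | hv₁ <;> rcases hvert w hw with hw₁ | hw₁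
  · exact absurd (hv₁.trans hw₁.symm) hvw₁
  · exact ⟨c, hc, v, hv, w, hw, hv₁, hw₁, hvc, hwc⟩
  · exact ⟨c, hc, w, hw, v, hv, hw₁, hv₁, hwc, hvc⟩
  · exact absurd (hv₁.trans hw₁.symm) hvw₁

end Quadrilateral

lemma abs_le_of_mul_eq_sub {α : Type*} [Ring α] [LinearOrder α] [IsStrictOrderedRing α]
    {a h T L M : α} (hh : 1 ≤ h) (hT : 0 ≤ T) (hTM : T ≤ M) (hL : 0 ≤ L) (hLM : L ≤ M)
    (heq : a * h = T - L) : |a| ≤ M :=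
  calc |a| ≤ |a| * h := le_mul_of_one_le_right (abs_nonneg a) hh
    _ = |T - L| := by rw [← heq, abs_mul, abs_of_nonneg (zero_le_one.trans hh)]
    _ ≤ M := abs_sub_le_of_nonneg_of_le hT hTM hL hLM

theorem hirzebruch_parameter_bound_general (N : ℕ) (a : ℤ)
    (P : Set (Fin 2 → ℝ)) (hP : IsSmoothPolytope P)
    (hv : (Set.extremePoints ℝ P).ncard = 4)
    (hnormals : {n : Fin 2 → ℤ | IsOuterFacetNormal P n} =
      {![1, 0], ![0, 1], ![0, -1], ![-1, -a]})
    (hcard : (latticePts P).ncard ≤ N) :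
    -(N : ℤ) ≤ a ∧ a ≤ (N : ℤ) := by
  obtain ⟨hlat, hspan, -, -⟩ := hP
  have hnormal : ∀ n ∈ ({![1, 0], ![0, 1], ![0, -1], ![-1, -a]} : Set (Fin 2 → ℤ)),
      IsOuterFacetNormal P n := fun n hn => (hnormals ▸ hn :)
  obtain ⟨b, t, hbt, hvert⟩ := exists_apply_one_eq_or_eq_of_mem_extremePoints hspan hv
    (hnormal _ (by simp)) (hnormal _ (by simp))
  obtain ⟨c, hc, vt, hvt, vb, hvb, hvt₁, hvb₁, hvtc, hvbc⟩ :=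
    (hnormal ![1, 0] (by simp)).exists_top_bottom hvert (by simp)
  obtain ⟨c', -, wt, hwt, wb, hwb, hwt₁, hwb₁, hwtc, hwbc⟩ :=
    (hnormal ![-1, -a] (by simp)).exists_top_bottom hvert (by simp)
  simp only [dotZR_fin_two, Fin.isValue, Matrix.cons_val_zero, Matrix.cons_val_one,
    Int.cast_zero, Int.cast_one, Int.cast_neg, zero_mul, one_mul, neg_mul,
    add_zero] at hc hvtc hvbc hwtc hwbc
  have hlp := hlat.extremePoints_subset_latticePts
  have hT := hlat.sub_add_one_le_ncard_latticePts (hlp hwt) (hlp hvt) (hwt₁.trans hvt₁.symm)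
    (hvtc ▸ hc wt hwt.1)
  have hL := hlat.sub_add_one_le_ncard_latticePts (hlp hwb) (hlp hvb) (hwb₁.trans hvb₁.symm)
    (hvbc ▸ hc wb hwb.1)
  have hh := add_one_le_of_lt_of_mem_latticePts (hlp hvb) (hlp hvt) (hvb₁ ▸ hvt₁ ▸ hbt)
  have hcard' : ((latticePts P).ncard : ℝ) ≤ N := by exact_mod_cast hcard
  have ha : |(a : ℝ)| ≤ N - 1 :=
    abs_le_of_mul_eq_sub (h := vt 1 - vb 1) (T := vt 0 - wt 0) (L := vb 0 - wb 0)
      (by linarith) (by linarith [hc wt hwt.1]) (by linarith) (by linarith [hc wb hwb.1])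
      (by linarith)
      (by linear_combination hwbc - hwtc + (a : ℝ) * (hvt₁ - hwt₁ - hvb₁ + hwb₁) - hvtc + hvbc)
  have ha' : |a| ≤ N - 1 := by exact_mod_cast ha
  constructor <;> linarith [abs_le.mp ha']

/-- A smooth lattice quadrilateral whose normal fan is that of the Hirzebruch surface
`F_a` and which has at most `N` lattice points satisfies `-N ≤ a ≤ N`. -/
theorem hirzebruch_parameter_bound (N : ℕ) (hN : 0 < N) (a : ℤ)
    (P : Set (Fin 2 → ℝ)) (hP : IsSmoothPolytope P)
    (hv : (Set.extremePoints ℝ P).ncard = 4)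
    (hnormals : {n : Fin 2 → ℤ | IsOuterFacetNormal P n} =
      {![1, 0], ![0, 1], ![0, -1], ![-1, -a]})
    (hcard : (latticePts P).ncard ≤ N) :
    -(N : ℤ) ≤ a ∧ a ≤ (N : ℤ) :=
  hirzebruch_parameter_bound_general N a P hP hv hnormals hcard
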